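/- arXiv:1808.03275 — 5 statements merged into one kernel-verified Lean document; each statement's English description precedes it below -/
import Mathlib

section
/- Let f, g, h, φ, ξ₁, ξ₂ : ℂ → ℂ with f, φ, ξ₁, ξ₂ continuous and with the composition h ∘ g having dense range in ℂ. If g ∘ h = φ ∘ h ∘ g, f ∘ g = ξ₁ ∘ g ∘ f, and g ∘ (f ∘ h) = ξ₂ ∘ (f ∘ h) ∘ g, then f ∘ φ = (ξ₁ ∘ ξ₂) ∘ f. (This is the paper's Lemma 3.1: in a nearly abelian cancellative transcendental semigroup S, for any f ∈ S and any commutator φ ∈ Φ(S) there is a map ξ in the group generated by the commutators Φ(S) such that f ∘ φ = ξ ∘ f; here cancellation of h ∘ g on the right is effected by continuity together with density of the range of h ∘ g.) -/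
/-- paper's Lemma 3.1: If `f, φ, ξ₁, ξ₂` are continuous, `h ∘ g` has
dense range, `g ∘ h = φ ∘ h ∘ g`, `f ∘ g = ξ₁ ∘ g ∘ f` and
`g ∘ (f ∘ h) = ξ₂ ∘ (f ∘ h) ∘ g`, then `f ∘ φ = (ξ₁ ∘ ξ₂) ∘ f`. -/
theorem comp_commutator_eq
    (f g h φ ξ₁ ξ₂ : ℂ → ℂ)
    (hfc : Continuous f) (hφc : Continuous φ)
    (hξ₁c : Continuous ξ₁) (hξ₂c : Continuous ξ₂)
    (hdense : DenseRange (h ∘ g))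
    (h₁ : g ∘ h = φ ∘ h ∘ g)
    (h₂ : f ∘ g = ξ₁ ∘ g ∘ f)
    (h₃ : g ∘ (f ∘ h) = ξ₂ ∘ (f ∘ h) ∘ g) :
    f ∘ φ = (ξ₁ ∘ ξ₂) ∘ f := by
  have key : (f ∘ φ) ∘ (h ∘ g) = ((ξ₁ ∘ ξ₂) ∘ f) ∘ (h ∘ g) := by
    calc (f ∘ φ) ∘ (h ∘ g) = f ∘ (φ ∘ h ∘ g) := by rfl
    _ = f ∘ (g ∘ h) := by rw [← h₁]
    _ = (f ∘ g) ∘ h := by rfl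
    _ = (ξ₁ ∘ g ∘ f) ∘ h := by rw [h₂]
    _ = ξ₁ ∘ (g ∘ (f ∘ h)) := by rfl
    _ = ξ₁ ∘ (ξ₂ ∘ (f ∘ h) ∘ g) := by rw [h₃]
    _ = ((ξ₁ ∘ ξ₂) ∘ f) ∘ (h ∘ g) := by rfl
  exact Continuous.ext_on hdense (hfc.comp hφc) ((hξ₁c.comp hξ₂c).comp hfc)
    (fun x ⟨y, hy⟩ => hy ▸ congrFun key y)
end

section
/- Let f₁, …, fₙ : ℂ → ℂ and let S be the semigroup (under composition) generated by f₁, …, fₙ, i.e., the set of all finite compositions of these maps. Assume every element of S is continuous with dense range in ℂ, and assume the near-abelian commutation condition: for all a, b ∈ S there exists a continuous map φ : ℂ → ℂ with a ∘ b = φ ∘ b ∘ a. Let Φ(S) = {φ : ℂ → ℂ : φ is continuous and there exist a, b ∈ S with a ∘ b = φ ∘ b ∘ a} be the set of commutators of S. Then every element h ∈ S can be written in the form h = ψ ∘ f₁^{t₁} ∘ f₂^{t₂} ∘ ⋯ ∘ fₙ^{tₙ}, where ψ belongs to the monoid (under composition, with identity) generated by Φ(S), the exponents t₁, …, tₙ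 are non-negative integers, and fᵢ^{tᵢ} denotes the tᵢ-th iterate of fᵢ. -/
/-- Membership in the semigroup (under composition) generated by finitely many
self-maps of `ℂ`. -/
inductive InSemigroup {n : ℕ} (fs : Fin n → ℂ → ℂ) : (ℂ → ℂ) → Prop
  | gen (i : Fin n) : InSemigroup fs (fs i)
  | comp {f g : ℂ → ℂ} : InSemigroup fs f → InSemigroup fs g → InSemigroup fs (f ∘ g)

/-- Membership in the monoid (under composition, with identity) generated by a
set of self-maps of `ℂ`. -/
inductive InMonoidGen (Φ : Set (ℂ → ℂ)) : (ℂ → ℂ) → Prop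
  | id : InMonoidGen Φ id
  | gen {φ : ℂ → ℂ} : φ ∈ Φ → InMonoidGen Φ φ
  | comp {φ ψ : ℂ → ℂ} : InMonoidGen Φ φ → InMonoidGen Φ ψ → InMonoidGen Φ (φ ∘ ψ)

namespace NAFact

variable {n : ℕ}

/-- The set of commutators. -/
def PhiSet (fs : Fin n → ℂ → ℂ) : Set (ℂ → ℂ) :=
  {φ : ℂ → ℂ | Continuous φ ∧ ∃ a b : ℂ → ℂ,
      InSemigroup fs a ∧ InSemigroup fs b ∧ a ∘ b = φ ∘ b ∘ a}

/-- Either a semigroup element or the identity. -/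
def Good (fs : Fin n → ℂ → ℂ) (a : ℂ → ℂ) : Prop :=
  InSemigroup fs a ∨ a = id

lemma good_comp {fs : Fin n → ℂ → ℂ} {a b : ℂ → ℂ}
    (ha : Good fs a) (hb : Good fs b) : Good fs (a ∘ b) := by
  rcases ha with ha | rfl
  · rcases hb with hb | rfl
    · exact Or.inl (ha.comp hb)
    · rw [Function.comp_id]; exact Or.inl ha
  · rw [Function.id_comp]; exact hb

lemma good_iterate {fs : Fin n → ℂ → ℂ} {a : ℂ → ℂ}
    (ha : Good fs a) (k : ℕ) : Good fs (a^[k]) := by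
  induction k with
  | zero => rw [Function.iterate_zero]; exact Or.inr rfl
  | succ k ih => rw [Function.iterate_succ']; exact good_comp ha ih

lemma swap {fs : Fin n → ℂ → ℂ}
    (hna : ∀ a b : ℂ → ℂ, InSemigroup fs a → InSemigroup fs b →
      ∃ φ : ℂ → ℂ, Continuous φ ∧ a ∘ b = φ ∘ b ∘ a)
    {a b : ℂ → ℂ} (ha : Good fs a) (hb : Good fs b) :
    ∃ ψ, InMonoidGen (PhiSet fs) ψ ∧ a ∘ b = ψ ∘ (b ∘ a) := by
  rcases ha with ha | rfl
  · rcases hb with hb | rfl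
    · obtain ⟨φ, hφc, hφ⟩ := hna a b ha hb
      exact ⟨φ, .gen ⟨hφc, a, b, ha, hb, hφ⟩, hφ⟩
    · exact ⟨id, .id, rfl⟩
  · exact ⟨id, .id, rfl⟩

lemma moveM {fs : Fin n → ℂ → ℂ}
    (hcont : ∀ h : ℂ → ℂ, InSemigroup fs h → Continuous h ∧ DenseRange h)
    (hna : ∀ a b : ℂ → ℂ, InSemigroup fs a → InSemigroup fs b →
      ∃ φ : ℂ → ℂ, Continuous φ ∧ a ∘ b = φ ∘ b ∘ a)
    {a : ℂ → ℂ} (ha : Good fs a) {ψ : ℂ → ℂ}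
    (hψ : InMonoidGen (PhiSet fs) ψ) :
    ∃ ψ', InMonoidGen (PhiSet fs) ψ' ∧ a ∘ ψ = ψ' ∘ a := by
  induction hψ with
  | id => exact ⟨id, .id, rfl⟩
  | @gen φ hφ =>
    rcases ha with ha | rfl
    · obtain ⟨hφc, c, d, hc, hd, hcd⟩ := hφ
      obtain ⟨φ₁, hφ₁c, h₁⟩ := hna a (c ∘ d) ha (hc.comp hd)
      obtain ⟨φ₂, hφ₂c, h₂⟩ := hna (d ∘ c) a (hd.comp hc) ha
      have hdc : DenseRange (d ∘ c) := (hcont _ (hd.comp hc)).2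
      have hac : Continuous a := (hcont _ ha).1
      have key : (a ∘ φ) ∘ (d ∘ c) = ((φ₁ ∘ (φ ∘ φ₂)) ∘ a) ∘ (d ∘ c) := by
        funext x
        have e1 : ∀ y, c (d y) = φ (d (c y)) := fun y => congrFun hcd y
        have e2 : ∀ y, a (c (d y)) = φ₁ (c (d (a y))) := fun y => congrFun h₁ y
        have e3 : ∀ y, d (c (a y)) = φ₂ (a (d (c y))) := fun y => congrFun h₂ y
        simp only [Function.comp_apply]
        rw [← e1 x, e2 x, e1 (a x), e3 x]
      have heq : a ∘ φ = (φ₁ ∘ (φ ∘ φ₂)) ∘ a :=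
        hdc.equalizer (hac.comp hφc)
          (hφ₁c.comp (hφc.comp (hφ₂c.comp hac))) key
      refine ⟨φ₁ ∘ (φ ∘ φ₂), ?_, heq⟩
      exact .comp (.gen ⟨hφ₁c, a, c ∘ d, ha, hc.comp hd, h₁⟩)
        (.comp (.gen ⟨hφc, c, d, hc, hd, hcd⟩)
          (.gen ⟨hφ₂c, d ∘ c, a, hd.comp hc, ha, h₂⟩))
    · exact ⟨φ, .gen hφ, rfl⟩
  | @comp φ₁ φ₂ h1 h2 ih1 ih2 =>
    obtain ⟨p, hp, hpe⟩ := ih1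
    obtain ⟨q, hq, hqe⟩ := ih2
    refine ⟨p ∘ q, .comp hp hq, ?_⟩
    funext x
    have e1 : ∀ y, a (φ₁ y) = p (a y) := fun y => congrFun hpe y
    have e2 : ∀ y, a (φ₂ y) = q (a y) := fun y => congrFun hqe y
    simp only [Function.comp_apply]
    rw [e1, e2]

/-- The product `f₁^{t₁} ∘ ⋯ ∘ fₘ^{tₘ}`. -/
def Fm {m : ℕ} (gs : Fin m → ℂ → ℂ) (t : Fin m → ℕ) : ℂ → ℂ :=
  (List.ofFn fun i => (gs i)^[t i]).foldr (· ∘ ·) id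

lemma Fm_succ {m : ℕ} (gs : Fin (m + 1) → ℂ → ℂ) (t : Fin (m + 1) → ℕ) :
    Fm gs t = (gs 0)^[t 0] ∘ Fm (fun i => gs i.succ) (fun i => t i.succ) := by
  simp [Fm, List.ofFn_succ]

lemma Fm_zero : ∀ {m : ℕ} (gs : Fin m → ℂ → ℂ), Fm gs (fun _ => 0) = id
  | 0, gs => by simp [Fm]
  | m + 1, gs => by
    rw [Fm_succ]
    simp [Fm_zero (fun i => gs i.succ)]

lemma good_Fm {fs : Fin n → ℂ → ℂ} :
    ∀ {m : ℕ} (gs : Fin m → ℂ → ℂ), (∀ i, Good fs (gs i)) →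
      ∀ t : Fin m → ℕ, Good fs (Fm gs t)
  | 0, gs, _, t => Or.inr (by simp [Fm])
  | m + 1, gs, hgs, t => by
    rw [Fm_succ]
    exact good_comp (good_iterate (hgs 0) _)
      (good_Fm (fun i => gs i.succ) (fun i => hgs i.succ) _)

lemma Fm_single :
    ∀ {m : ℕ} (gs : Fin m → ℂ → ℂ) (i : Fin m),
      Fm gs (fun j => if j = i then 1 else 0) = gs i
  | 0, _, i => i.elim0
  | m + 1, gs, i => by
    rw [Fm_succ]
    induction i using Fin.cases with
    | zero =>
      have ht : (fun j : Fin m => if j.succ = (0 : Fin (m + 1)) then 1 else 0)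
          = fun _ => 0 := by
        funext j; simp [Fin.succ_ne_zero]
      rw [ht, Fm_zero]
      simp
    | succ j =>
      have h0 : (if (0 : Fin (m + 1)) = j.succ then 1 else 0) = 0 :=
        if_neg (Fin.succ_ne_zero j).symm
      have ht : (fun k : Fin m => if k.succ = j.succ then 1 else 0)
          = fun k => if k = j then 1 else 0 := by
        funext k; simp [Fin.succ_inj]
      rw [h0, ht, Fm_single (fun k => gs k.succ) j]
      simp

lemma merge {fs : Fin n → ℂ → ℂ}
    (hcont : ∀ h : ℂ → ℂ, InSemigroup fs h → Continuous h ∧ DenseRange h)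
    (hna : ∀ a b : ℂ → ℂ, InSemigroup fs a → InSemigroup fs b →
      ∃ φ : ℂ → ℂ, Continuous φ ∧ a ∘ b = φ ∘ b ∘ a) :
    ∀ {m : ℕ} (gs : Fin m → ℂ → ℂ), (∀ i, Good fs (gs i)) →
      ∀ s t : Fin m → ℕ,
        ∃ ψ, InMonoidGen (PhiSet fs) ψ ∧
          Fm gs s ∘ Fm gs t = ψ ∘ Fm gs (fun i => s i + t i)
  | 0, gs, _, s, t => ⟨id, .id, by simp [Fm]⟩
  | m + 1, gs, hgs, s, t => by
    set gs' := fun i : Fin m => gs i.succ with hgs'def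
    have hgs' : ∀ i, Good fs (gs' i) := fun i => hgs i.succ
    obtain ⟨ψ₃, hψ₃, h₃⟩ := merge hcont hna gs' hgs'
      (fun i => s i.succ) (fun i => t i.succ)
    obtain ⟨ψ₁, hψ₁, h₁⟩ := swap hna (good_Fm gs' hgs' (fun i => s i.succ))
      (good_iterate (hgs 0) (t 0))
    obtain ⟨ψ₂, hψ₂, h₂⟩ := moveM hcont hna (good_iterate (hgs 0) (s 0)) hψ₁
    obtain ⟨ψ₄, hψ₄, h₄⟩ := moveM hcont hna
      (good_iterate (hgs 0) (s 0 + t 0)) hψ₃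
    refine ⟨ψ₂ ∘ ψ₄, .comp hψ₂ hψ₄, ?_⟩
    rw [Fm_succ gs s, Fm_succ gs t, Fm_succ gs (fun i => s i + t i)]
    funext x
    have p₁ : ∀ y, Fm gs' (fun i => s i.succ) ((gs 0)^[t 0] y)
        = ψ₁ ((gs 0)^[t 0] (Fm gs' (fun i => s i.succ) y)) :=
      fun y => congrFun h₁ y
    have p₂ : ∀ y, (gs 0)^[s 0] (ψ₁ y) = ψ₂ ((gs 0)^[s 0] y) :=
      fun y => congrFun h₂ y
    have p₃ : ∀ y, Fm gs' (fun i => s i.succ) (Fm gs' (fun i => t i.succ) y)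
        = ψ₃ (Fm gs' (fun i => s i.succ + t i.succ) y) :=
      fun y => congrFun h₃ y
    have p₄ : ∀ y, (gs 0)^[s 0 + t 0] (ψ₃ y)
        = ψ₄ ((gs 0)^[s 0 + t 0] y) := fun y => congrFun h₄ y
    simp only [Function.comp_apply]
    rw [p₁, p₂, ← Function.iterate_add_apply, p₃, p₄]

end NAFact

/-- paper's Theorem 1.2: in a nearly abelian semigroup
`S = ⟨f₁, …, fₙ⟩` of continuous dense-range maps, every element `h ∈ S` can be
written as `h = ψ ∘ f₁^{t₁} ∘ ⋯ ∘ fₙ^{tₙ}` with `ψ` in the monoid generated by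
the set of commutators `Φ(S)` and `tᵢ` non-negative integers. -/
theorem nearlyAbelian_factorization
    {n : ℕ} (fs : Fin n → ℂ → ℂ)
    (hcont : ∀ h : ℂ → ℂ, InSemigroup fs h → Continuous h ∧ DenseRange h)
    (hna : ∀ a b : ℂ → ℂ, InSemigroup fs a → InSemigroup fs b →
      ∃ φ : ℂ → ℂ, Continuous φ ∧ a ∘ b = φ ∘ b ∘ a)
    (h : ℂ → ℂ) (hh : InSemigroup fs h) :
    ∃ (ψ : ℂ → ℂ) (t : Fin n → ℕ),
      InMonoidGen
        {φ : ℂ → ℂ | Continuous φ ∧ ∃ a b : ℂ → ℂ,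
          InSemigroup fs a ∧ InSemigroup fs b ∧ a ∘ b = φ ∘ b ∘ a} ψ ∧
      h = ψ ∘ (List.ofFn fun i => (fs i)^[t i]).foldr (· ∘ ·) id := by
  induction hh with
  | gen i =>
    refine ⟨id, fun j => if j = i then 1 else 0, .id, ?_⟩
    rw [Function.id_comp]
    exact (NAFact.Fm_single fs i).symm
  | @comp f g hf hg ihf ihg =>
    obtain ⟨ψ₁, t₁, hψ₁, e₁⟩ := ihf
    obtain ⟨ψ₂, t₂, hψ₂, e₂⟩ := ihg
    have hgood : ∀ i, NAFact.Good fs (fs i) := fun i => Or.inl (.gen i)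
    obtain ⟨ψ₂', hψ₂', e₂'⟩ := NAFact.moveM hcont hna
      (NAFact.good_Fm fs hgood t₁) hψ₂
    obtain ⟨ψ₃, hψ₃, e₃⟩ := NAFact.merge hcont hna fs hgood t₁ t₂
    refine ⟨ψ₁ ∘ (ψ₂' ∘ ψ₃), fun i => t₁ i + t₂ i,
      .comp hψ₁ (.comp hψ₂' hψ₃), ?_⟩
    show f ∘ g = (ψ₁ ∘ (ψ₂' ∘ ψ₃)) ∘ NAFact.Fm fs (fun i => t₁ i + t₂ i)
    rw [e₁, e₂]
    funext x
    have p₁ : ∀ y, NAFact.Fm fs t₁ (ψ₂ y) = ψ₂' (NAFact.Fm fs t₁ y) :=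
      fun y => congrFun e₂' y
    have p₂ : ∀ y, NAFact.Fm fs t₁ (NAFact.Fm fs t₂ y)
        = ψ₃ (NAFact.Fm fs (fun i => t₁ i + t₂ i) y) :=
      fun y => congrFun e₃ y
    simp only [Function.comp_apply]
    show ψ₁ (NAFact.Fm fs t₁ (ψ₂ (NAFact.Fm fs t₂ x)))
      = ψ₁ (ψ₂' (ψ₃ (NAFact.Fm fs (fun i => t₁ i + t₂ i) x)))
    rw [p₁, p₂]
end

section
/- Let f, g, φ, ψ : ℂ → ℂ with f, φ, ψ continuous and with g ∘ f having dense range in ℂ. If f ∘ g = φ ∘ g ∘ f and f ∘ (f^{n} ∘ g) = ψ ∘ (f^{n} ∘ g) ∘ f for some n ∈ ℕ, then ψ ∘ f^{n} = f^{n} ∘ φ, where f^{n} denotes the n-th iterate of f. In commutator notation: [f, f^{n} ∘ g] ∘ f^{n} = f^{n} ∘ [f, g]. -/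
/-- commutator identity `[f, fⁿ ∘ g] ∘ fⁿ = fⁿ ∘ [f, g]`: if
`f, φ, ψ` are continuous, `g ∘ f` has dense range, `f ∘ g = φ ∘ g ∘ f` and
`f ∘ (f^[n] ∘ g) = ψ ∘ (f^[n] ∘ g) ∘ f`, then `ψ ∘ f^[n] = f^[n] ∘ φ`. -/
theorem commutator_iterate_comp_left
    (f g φ ψ : ℂ → ℂ) (n : ℕ)
    (hfc : Continuous f) (hφc : Continuous φ) (hψc : Continuous ψ)
    (hdense : DenseRange (g ∘ f))
    (h₁ : f ∘ g = φ ∘ g ∘ f)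
    (h₂ : f ∘ (f^[n] ∘ g) = ψ ∘ (f^[n] ∘ g) ∘ f) :
    ψ ∘ f^[n] = f^[n] ∘ φ := by
  refine hdense.equalizer (hψc.comp (hfc.iterate n)) ((hfc.iterate n).comp hφc) ?_
  funext x
  have e2 := congrFun h₂ x
  have e1 := congrFun h₁ x
  simp only [Function.comp] at e1 e2 ⊢
  calc ψ (f^[n] (g (f x))) = f (f^[n] (g x)) := e2.symm
    _ = f^[n] (f (g x)) := (Function.iterate_succ_apply' f n (g x)).symm.trans
        (Function.iterate_succ_apply f n (g x))
    _ = f^[n] (φ (g (f x))) := by rw [e1]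
end

section
/- Let f, g, χ, ψ : ℂ → ℂ with g, f, χ, ψ continuous and with f ∘ g having dense range in ℂ. If (f ∘ g) ∘ (g ∘ f) = χ ∘ (g ∘ f) ∘ (f ∘ g) and g ∘ f = ψ ∘ f ∘ g, then χ ∘ (g ∘ f) = (f ∘ g) ∘ ψ. In commutator notation: [f ∘ g, g ∘ f] ∘ g ∘ f = f ∘ g ∘ [g, f]. -/
/-- commutator identity `[f ∘ g, g ∘ f] ∘ g ∘ f = f ∘ g ∘ [g, f]`:
if `g, f, χ, ψ` are continuous, `f ∘ g` has dense range,
`(f ∘ g) ∘ (g ∘ f) = χ ∘ (g ∘ f) ∘ (f ∘ g)` and `g ∘ f = ψ ∘ f ∘ g`, then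
`χ ∘ (g ∘ f) = (f ∘ g) ∘ ψ`. -/
theorem commutator_comp_pair
    (f g χ ψ : ℂ → ℂ)
    (hgc : Continuous g) (hfc : Continuous f)
    (hχc : Continuous χ) (hψc : Continuous ψ)
    (hdense : DenseRange (f ∘ g))
    (h₁ : (f ∘ g) ∘ (g ∘ f) = χ ∘ (g ∘ f) ∘ (f ∘ g))
    (h₂ : g ∘ f = ψ ∘ f ∘ g) :
    χ ∘ (g ∘ f) = (f ∘ g) ∘ ψ := by
  apply hdense.equalizer (hχc.comp (hgc.comp hfc)) ((hfc.comp hgc).comp hψc)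
  calc (χ ∘ (g ∘ f)) ∘ (f ∘ g) = (f ∘ g) ∘ (g ∘ f) := h₁.symm
    _ = ((f ∘ g) ∘ ψ) ∘ (f ∘ g) := by rw [h₂]; rfl
end

section
/- Let λ ∈ ℂ with λ ≠ 0, let f : ℂ → ℂ be f(z) = λ·cos(z), and let φ : ℂ → ℂ be φ(z) = −z. Then φ ∘ f ≠ f ∘ φ and φ ∘ f ≠ f. Consequently, for the nearly abelian semigroup S = ⟨λ·cos z, −λ·cos z⟩, whose set of commutators generates the group G = {identity, φ}, there is no ξ ∈ G with φ ∘ f = f ∘ ξ: given φ ∈ Φ(S), it is not always possible to find ξ in the group generated by Φ(S) satisfying φ ∘ f = f ∘ ξ. -/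
/-- for `f z = λ cos z` (`λ ≠ 0`) and `φ z = -z`, we have
`φ ∘ f ≠ f ∘ φ`, `φ ∘ f ≠ f`, and there is no `ξ` in the group
`G = {identity, φ}` generated by the commutators with `φ ∘ f = f ∘ ξ`. -/
theorem no_right_commutation_cos
    (lam : ℂ) (hlam : lam ≠ 0)
    (f φ : ℂ → ℂ)
    (hf : f = fun z => lam * Complex.cos z)
    (hφ : φ = fun z => -z) :
    φ ∘ f ≠ f ∘ φ ∧ φ ∘ f ≠ f ∧
      ∀ ξ : ℂ → ℂ, ξ ∈ ({id, φ} : Set (ℂ → ℂ)) → φ ∘ f ≠ f ∘ ξ := by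
  subst hf hφ
  have hne : ((fun z : ℂ => -z) ∘ fun z => lam * Complex.cos z) ≠
      (fun z => lam * Complex.cos z) := by
    intro h
    have h0 := congrFun h 0
    simp [Function.comp] at h0
    exact hlam (by linear_combination -h0 / 2)
  have hcomm : ((fun z : ℂ => lam * Complex.cos z) ∘ fun z : ℂ => -z) =
      (fun z => lam * Complex.cos z) := by
    funext z; simp [Function.comp]
  refine ⟨by rw [hcomm]; exact hne, hne, ?_⟩
  rintro ξ (rfl | rfl)
  · simpa using hne
  · rw [hcomm]; exact hne
end
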